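/- arXiv:0902.3073 — 2 statements merged into one kernel-verified Lean document; each statement's English description precedes it below -/
import Mathlib

section
/- Let g(a,x) = Σ_{n≥0} g_n Γ(a+n) x^n where g_n > 0. Then for b > a > 0 and δ > 0, every power series coefficient of g(a+δ,x)g(b,x) − g(b+δ,x)g(a,x) is negative; consequently for x > 0, g(a+δ,x)g(b,x) < g(b+δ,x)g(a,x), i.e., a ↦ g(a,x) is strictly log-convex. -/
/-
Pairing the `k`-th and `(m-k)`-th summands of the `m`-th coefficient reduces everything to an
inequality between Gamma products with shifts `s = k`, `t = m - k`. Since `log Γ` is strictly convex,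
`r(x) = Γ(b+x)/Γ(a+x)` is strictly increasing, and the pair equals
`Γ(a+δ+s)Γ(a+t) (r(t) - r(δ+s)) - Γ(a+δ+t)Γ(a+s) (r(δ+t) - r(s))`. For `s ≤ t` the second bracket is
positive and exceeds the first, and log-convexity once more makes the second prefactor the larger one.
For `x > 0` the Cauchy product turns the negative coefficients into the inequality between the sums.
-/

open Real Set Finset

theorem Real.strictConvexOn_log_Gamma : StrictConvexOn ℝ (Ioi 0) (log ∘ Gamma) := by
  have hshift : ConvexOn ℝ (Ioi 0) (fun x => log (Gamma (x + 1))) :=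
    (convexOn_log_Gamma.translate_left 1).subset
      (fun x (hx : 0 < x) => show 0 < 1 + x by linarith) (convex_Ioi 0)
  refine (hshift.add_strictConvexOn strictConcaveOn_log_Ioi.neg).congr fun x (hx : 0 < x) => ?_
  simp only [Pi.add_apply, Pi.neg_apply, Function.comp_apply, Gamma_add_one hx.ne',
    log_mul hx.ne' (Gamma_pos_of_pos hx).ne']
  ring

theorem StrictConvexOn.add_lt_add_of_add_eq {s : Set ℝ} {φ : ℝ → ℝ} (hφ : StrictConvexOn ℝ s φ)
    {x y z w : ℝ} (hx : x ∈ s) (hw : w ∈ s) (hxy : x < y) (hxz : x < z) (h : y + z = x + w) :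
    φ y + φ z < φ x + φ w := by
  have hxw : x < w := by linarith
  set t := (y - x) / (w - x) with ht
  have ht0 : 0 < t := div_pos (sub_pos.2 hxy) (sub_pos.2 hxw)
  have ht1 : 0 < 1 - t := by
    rw [sub_pos, div_lt_one (sub_pos.2 hxw)]
    linarith
  have ey : (1 - t) * x + t * w = y := by
    rw [ht]
    field_simp [(sub_pos.2 hxw).ne']
    ring
  have ez : t * x + (1 - t) * w = z := by linarith
  have hy := hφ.2 hx hw hxw.ne ht1 ht0 (by ring)
  have hz := hφ.2 hx hw hxw.ne ht0 ht1 (by ring)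
  simp only [smul_eq_mul, ey, ez] at hy hz
  linarith

section LogConvex

variable {f : ℝ → ℝ}

theorem mul_lt_mul_of_strictConvexOn_log (hf : StrictConvexOn ℝ (Ioi 0) (log ∘ f))
    (hpos : ∀ x, 0 < x → 0 < f x) {x y z w : ℝ} (hx : 0 < x) (hxy : x < y) (hxz : x < z)
    (h : y + z = x + w) : f y * f z < f x * f w := by
  have hw : 0 < w := by linarith
  have hlog := hf.add_lt_add_of_add_eq hx hw hxy hxz h
  simp only [Function.comp_apply] at hlog
  rwa [← log_mul (hpos y (by linarith)).ne' (hpos z (by linarith)).ne',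
    ← log_mul (hpos x hx).ne' (hpos w hw).ne',
    log_lt_log_iff (mul_pos (hpos y (by linarith)) (hpos z (by linarith)))
      (mul_pos (hpos x hx) (hpos w hw))] at hlog

theorem strictMonoOn_div_of_strictConvexOn_log (hf : StrictConvexOn ℝ (Ioi 0) (log ∘ f))
    (hpos : ∀ x, 0 < x → 0 < f x) {a b : ℝ} (ha : 0 < a) (hab : a < b) :
    StrictMonoOn (fun x => f (b + x) / f (a + x)) (Ici 0) := by
  intro s (hs : 0 ≤ s) t (ht : 0 ≤ t) hst
  rw [div_lt_div_iff₀ (hpos _ (by linarith)) (hpos _ (by linarith)), mul_comm (f (b + t))]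
  exact mul_lt_mul_of_strictConvexOn_log hf hpos (x := a + s) (w := b + t) (by linarith)
    (by linarith) (by linarith) (by ring)

def crossDiff (f : ℝ → ℝ) (a b δ s t : ℝ) : ℝ :=
  f (a + δ + s) * f (b + t) - f (b + δ + s) * f (a + t)

theorem crossDiff_add_crossDiff_swap_neg_of_le (hf : StrictConvexOn ℝ (Ioi 0) (log ∘ f))
    (hpos : ∀ x, 0 < x → 0 < f x) {a b δ s t : ℝ} (ha : 0 < a) (hab : a < b) (hδ : 0 < δ)
    (hs : 0 ≤ s) (hst : s ≤ t) :
    crossDiff f a b δ s t + crossDiff f a b δ t s < 0 := by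
  set r := fun x => f (b + x) / f (a + x)
  have hr := strictMonoOn_div_of_strictConvexOn_log hf hpos ha hab
  have ht : 0 ≤ t := hs.trans hst
  have hδs : (0 : ℝ) ≤ δ + s := by linarith
  have hδt : (0 : ℝ) ≤ δ + t := by linarith
  set A := f (a + δ + s) * f (a + t)
  set B := f (a + δ + t) * f (a + s)
  have hA : 0 < A := mul_pos (hpos _ (by linarith)) (hpos _ (by linarith))
  have hAB : A ≤ B := by
    rcases hst.eq_or_lt with rfl | hlt
    · exact le_rfl
    · exact (mul_lt_mul_of_strictConvexOn_log hf hpos (x := a + s) (w := a + δ + t) (by linarith)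
        (by linarith) (by linarith) (by ring)).le.trans_eq (mul_comm _ _)
  have hY : 0 < r (δ + t) - r s := sub_pos.2 (hr hs hδt (by linarith))
  have hXY : r t - r (δ + s) < r (δ + t) - r s := by
    have := hr ht hδt (by linarith)
    have := hr hs hδs (by linarith)
    linarith
  have key : A * (r t - r (δ + s)) < B * (r (δ + t) - r s) := by
    rcases le_or_gt (r t - r (δ + s)) 0 with hX | hX
    · exact (mul_nonpos_of_nonneg_of_nonpos hA.le hX).trans_lt (mul_pos (hA.trans_le hAB) hY)
    · exact (mul_le_mul_of_nonneg_right hAB hX.le).trans_lt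
        (mul_lt_mul_of_pos_left hXY (hA.trans_le hAB))
  have e1 : crossDiff f a b δ s t = A * (r t - r (δ + s)) := by
    simp only [crossDiff, A, r, ← add_assoc]
    field_simp [(hpos (a + t) (by linarith)).ne', (hpos (a + δ + s) (by linarith)).ne']
  have e2 : crossDiff f a b δ t s = -(B * (r (δ + t) - r s)) := by
    simp only [crossDiff, B, r, ← add_assoc]
    field_simp [(hpos (a + s) (by linarith)).ne', (hpos (a + δ + t) (by linarith)).ne']
    ring
  linarith

theorem crossDiff_add_crossDiff_swap_neg (hf : StrictConvexOn ℝ (Ioi 0) (log ∘ f))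
    (hpos : ∀ x, 0 < x → 0 < f x) {a b δ s t : ℝ} (ha : 0 < a) (hab : a < b) (hδ : 0 < δ)
    (hs : 0 ≤ s) (ht : 0 ≤ t) :
    crossDiff f a b δ s t + crossDiff f a b δ t s < 0 := by
  rcases le_total s t with hst | hts
  · exact crossDiff_add_crossDiff_swap_neg_of_le hf hpos ha hab hδ hs hst
  · rw [add_comm]
    exact crossDiff_add_crossDiff_swap_neg_of_le hf hpos ha hab hδ ht hts

end LogConvex

theorem Finset.sum_range_succ_neg_of_add_reflect_neg (T : ℕ → ℝ) (m : ℕ)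
    (h : ∀ k ≤ m, T k + T (m - k) < 0) : ∑ k ∈ range (m + 1), T k < 0 := by
  have hreflect : ∑ k ∈ range (m + 1), T (m - k) = ∑ k ∈ range (m + 1), T k := by
    simpa using sum_range_reflect T (m + 1)
  have htwice : ∑ k ∈ range (m + 1), (T k + T (m - k)) < 0 :=
    sum_neg (fun k hk => h k (Nat.lt_succ_iff.1 (mem_range.1 hk))) nonempty_range_add_one
  rw [sum_add_distrib, hreflect] at htwice
  linarith

theorem sum_range_mul_pow_mul_mul_pow (u v : ℕ → ℝ) (x : ℝ) (n : ℕ) :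
    ∑ k ∈ range (n + 1), u k * x ^ k * (v (n - k) * x ^ (n - k)) =
      (∑ k ∈ range (n + 1), u k * v (n - k)) * x ^ n := by
  rw [sum_mul]
  refine sum_congr rfl fun k hk => ?_
  rw [← pow_mul_pow_sub x (Nat.lt_succ_iff.1 (mem_range.1 hk))]
  ring

theorem tsum_mul_tsum_lt_of_coeff_lt {u v u' v' : ℕ → ℝ} {x : ℝ} (hx : 0 ≤ x)
    (hu : Summable fun n => ‖u n * x ^ n‖) (hv : Summable fun n => ‖v n * x ^ n‖)
    (hu' : Summable fun n => ‖u' n * x ^ n‖) (hv' : Summable fun n => ‖v' n * x ^ n‖)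
    (h : ∀ n, ∑ k ∈ range (n + 1), u k * v (n - k) < ∑ k ∈ range (n + 1), u' k * v' (n - k)) :
    (∑' n, u n * x ^ n) * (∑' n, v n * x ^ n) < (∑' n, u' n * x ^ n) * (∑' n, v' n * x ^ n) := by
  rw [tsum_mul_tsum_eq_tsum_sum_range_of_summable_norm hu hv,
    tsum_mul_tsum_eq_tsum_sum_range_of_summable_norm hu' hv']
  refine Summable.tsum_lt_tsum (i := 0) (fun n => ?_) ?_
    (summable_norm_sum_mul_range_of_summable_norm hu hv).of_norm
    (summable_norm_sum_mul_range_of_summable_norm hu' hv').of_norm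
  · simp only [sum_range_mul_pow_mul_mul_pow]
    exact mul_le_mul_of_nonneg_right (h n).le (pow_nonneg hx n)
  · simpa using h 0

theorem stmt_15 (g : ℕ → ℝ) (hg : ∀ n, 0 < g n)
    (a b δ : ℝ) (ha : 0 < a) (hab : a < b) (hδ : 0 < δ) :
    (∀ m : ℕ,
      (∑ k ∈ Finset.range (m + 1),
        g k * g (m - k) *
          (Real.Gamma (a + δ + k) * Real.Gamma (b + (m - k : ℕ)) -
            Real.Gamma (b + δ + k) * Real.Gamma (a + (m - k : ℕ)))) < 0) ∧
    (∀ x : ℝ, 0 < x →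
      (∀ c : ℝ, 0 < c → Summable (fun n : ℕ => g n * Real.Gamma (c + n) * x ^ n)) →
      (∑' n : ℕ, g n * Real.Gamma (a + δ + n) * x ^ n) *
          (∑' n : ℕ, g n * Real.Gamma (b + n) * x ^ n) <
        (∑' n : ℕ, g n * Real.Gamma (b + δ + n) * x ^ n) *
          (∑' n : ℕ, g n * Real.Gamma (a + n) * x ^ n)) := by
  have hcoeff : ∀ m : ℕ, ∑ k ∈ range (m + 1), g k * g (m - k) *
      crossDiff Gamma a b δ k (m - k : ℕ) < 0 := fun m =>
    sum_range_succ_neg_of_add_reflect_neg _ m fun k hk => by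
      have hpair := crossDiff_add_crossDiff_swap_neg strictConvexOn_log_Gamma
        (fun _ => Gamma_pos_of_pos) ha hab hδ k.cast_nonneg (m - k).cast_nonneg
      rw [Nat.sub_sub_self hk, mul_comm (g (m - k)), ← mul_add]
      exact mul_neg_of_pos_of_neg (mul_pos (hg k) (hg (m - k))) hpair
  refine ⟨hcoeff, fun x hx hsum => ?_⟩
  have habs : ∀ c, 0 < c → Summable fun n : ℕ => ‖g n * Gamma (c + n) * x ^ n‖ :=
    fun c hc => (hsum c hc).abs
  refine tsum_mul_tsum_lt_of_coeff_lt (u := fun n => g n * Gamma (a + δ + n))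
    (v := fun n => g n * Gamma (b + n)) (u' := fun n => g n * Gamma (b + δ + n))
    (v' := fun n => g n * Gamma (a + n)) hx.le (habs _ (by linarith)) (habs _ (by linarith))
    (habs _ (by linarith)) (habs _ ha) fun n => ?_
  rw [← sub_neg, ← sum_sub_distrib]
  convert hcoeff n using 2 with k
  simp only [crossDiff]
  ring
end

section
/- Let h(a,x) = Σ_{n≥0} h_n x^n/(a)_n where h_n > 0. Then for b > a > 0 and δ > 0, every power series coefficient (at x^m, m ≥ 1) of h(a+δ,x)h(b,x) − h(b+δ,x)h(a,x) is negative; consequently for x > 0, a ↦ h(a,x) is strictly log-convex. -/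
/-!
Pair the term `k` of the coefficient of `x^m` with the term `m - k`. For `k ≤ j = k + d`,
splitting `(c)_{k+d} = (c)_k (c+k)_d` factors the pair into `1 / ((a+δ)_k (b)_k)`, which is at most
`1 / ((b+δ)_k (a)_k)`, times a bracket that compares the decrements `1/(c)_d - 1/(c+δ)_d` at
`c = a + k` and `c = b + k`. These decrease in `c` (strictly when `d ≥ 1`), because
`(x)_d (y+δ)_d ≤ (x+δ)_d (y)_d` and `(c+δ)_d - (c)_d` increases with `c`. The pair `k = 0` is
therefore strict, so every coefficient with `m ≥ 1` is negative, and for `x > 0` the Cauchy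
products of the two series compare strictly.
-/

/-- Pochhammer symbol (rising factorial) for real argument. -/
def poch (a : ℝ) (n : ℕ) : ℝ := ∏ i ∈ Finset.range n, (a + i)

open Finset

lemma poch_zero (c : ℝ) : poch c 0 = 1 := prod_range_zero _

lemma poch_succ (c : ℝ) (n : ℕ) : poch c (n + 1) = poch c n * (c + n) := prod_range_succ _ _

lemma poch_pos {c : ℝ} (hc : 0 < c) (n : ℕ) : 0 < poch c n :=
  prod_pos fun _ _ => by positivity

lemma poch_add (c : ℝ) (k d : ℕ) : poch c (k + d) = poch c k * poch (c + k) d := by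
  rw [poch, prod_range_add]
  congr 1
  exact prod_congr rfl fun i _ => by push_cast; ring

lemma poch_mono {x y : ℝ} (hx : 0 ≤ x) (hxy : x ≤ y) (n : ℕ) : poch x n ≤ poch y n :=
  prod_le_prod (fun _ _ => by positivity) fun _ _ => by linarith

lemma poch_mul_poch_add_le {x y t : ℝ} (hx : 0 ≤ x) (hxy : x ≤ y) (ht : 0 ≤ t) (n : ℕ) :
    poch x n * poch (y + t) n ≤ poch (x + t) n * poch y n := by
  have hy : 0 ≤ y := hx.trans hxy
  simp only [poch, ← prod_mul_distrib]
  refine prod_le_prod (fun i _ => by positivity) fun i _ => ?_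
  nlinarith [mul_le_mul_of_nonneg_left hxy ht]

lemma poch_mul_poch_add_lt {x y t : ℝ} (hx : 0 < x) (hxy : x < y) (ht : 0 < t) {n : ℕ}
    (hn : 1 ≤ n) : poch x n * poch (y + t) n < poch (x + t) n * poch y n := by
  have hy : 0 < y := hx.trans hxy
  simp only [poch, ← prod_mul_distrib]
  refine prod_lt_prod_of_nonempty (fun i _ => by positivity) (fun i _ => ?_)
    (nonempty_range_iff.mpr (by omega))
  nlinarith [mul_lt_mul_of_pos_left hxy ht]

lemma poch_add_sub_poch_mono {x y t : ℝ} (hx : 0 ≤ x) (hxy : x ≤ y) (ht : 0 ≤ t) (n : ℕ) :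
    poch (x + t) n - poch x n ≤ poch (y + t) n - poch y n := by
  induction n with
  | zero => simp [poch_zero]
  | succ n ih =>
    have hgap : 0 ≤ poch (x + t) n - poch x n := sub_nonneg.mpr (poch_mono hx (by linarith) n)
    have hshift : poch (x + t) n ≤ poch (y + t) n := poch_mono (by positivity) (by linarith) n
    calc poch (x + t) (n + 1) - poch x (n + 1)
        = (poch (x + t) n - poch x n) * (x + n) + poch (x + t) n * t := by
          rw [poch_succ, poch_succ]; ring
      _ ≤ (poch (y + t) n - poch y n) * (y + n) + poch (y + t) n * t := by
          gcongr
          · exact hgap.trans ih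
      _ = poch (y + t) (n + 1) - poch y (n + 1) := by rw [poch_succ, poch_succ]; ring

lemma one_div_poch_add_one_div_poch_le {x y t : ℝ} (hx : 0 < x) (hxy : x ≤ y) (ht : 0 ≤ t)
    (n : ℕ) : 1 / poch y n + 1 / poch (x + t) n ≤ 1 / poch x n + 1 / poch (y + t) n := by
  have hy : 0 < y := hx.trans_le hxy
  have hX := poch_pos hx n
  have hX' := poch_pos (add_pos_of_pos_of_nonneg hx ht) n
  have hY := poch_pos hy n
  have hY' := poch_pos (add_pos_of_pos_of_nonneg hy ht) n
  rw [div_add_div _ _ hY.ne' hX'.ne', div_add_div _ _ hX.ne' hY'.ne']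
  refine div_le_div₀ (by positivity) ?_ (by positivity)
    (by linarith [poch_mul_poch_add_le hx.le hxy ht n])
  linarith [poch_add_sub_poch_mono hx.le hxy ht n]

lemma one_div_poch_add_one_div_poch_lt {x y t : ℝ} (hx : 0 < x) (hxy : x < y) (ht : 0 < t)
    {n : ℕ} (hn : 1 ≤ n) :
    1 / poch y n + 1 / poch (x + t) n < 1 / poch x n + 1 / poch (y + t) n := by
  have hy : 0 < y := hx.trans hxy
  have hX := poch_pos hx n
  have hX' := poch_pos (add_pos hx ht) n
  have hY := poch_pos hy n
  have hY' := poch_pos (add_pos hy ht) n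
  rw [div_add_div _ _ hY.ne' hX'.ne', div_add_div _ _ hX.ne' hY'.ne']
  refine div_lt_div₀' ?_ (by linarith [poch_mul_poch_add_lt hx hxy ht hn]) (by positivity)
    (by positivity)
  linarith [poch_add_sub_poch_mono hx.le hxy.le ht.le n]

lemma sum_range_neg_of_add_reflect_nonpos {f : ℕ → ℝ} {m : ℕ}
    (hle : ∀ k ≤ m, f k + f (m - k) ≤ 0) (hlt : f 0 + f m < 0) :
    ∑ k ∈ range (m + 1), f k < 0 := by
  have hpairs : ∑ k ∈ range (m + 1), (f k + f (m - k)) < 0 := by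
    simpa using sum_lt_sum (fun k hk => hle k (Nat.lt_succ_iff.mp (mem_range.mp hk)))
      ⟨0, mem_range.mpr m.succ_pos, by simpa using hlt⟩
  have hreflect : ∑ k ∈ range (m + 1), f (m - k) = ∑ k ∈ range (m + 1), f k := by
    simpa using sum_range_reflect f (m + 1)
  rw [sum_add_distrib, hreflect] at hpairs
  linarith

lemma tsum_mul_tsum_lt_of_sum_range_mul {u v u' v' : ℕ → ℝ} (hu : Summable u)
    (hv : Summable v) (hu' : Summable u') (hv' : Summable v')
    (hle : ∀ n, ∑ k ∈ range (n + 1), u k * v (n - k) ≤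
      ∑ k ∈ range (n + 1), u' k * v' (n - k)) {N : ℕ}
    (hlt : ∑ k ∈ range (N + 1), u k * v (N - k) < ∑ k ∈ range (N + 1), u' k * v' (N - k)) :
    (∑' n, u n) * (∑' n, v n) < (∑' n, u' n) * (∑' n, v' n) := by
  rw [← summable_norm_iff] at hu hv hu' hv'
  rw [tsum_mul_tsum_eq_tsum_sum_range_of_summable_norm hu hv,
    tsum_mul_tsum_eq_tsum_sum_range_of_summable_norm hu' hv']
  exact Summable.tsum_lt_tsum hle hlt
    (summable_norm_sum_mul_range_of_summable_norm hu hv).of_norm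
    (summable_norm_sum_mul_range_of_summable_norm hu' hv').of_norm

section Coefficients

variable {a b δ : ℝ}

lemma one_div_poch_mul_poch_pair_le_of_le (ha : 0 < a) (hab : a ≤ b) (hδ : 0 ≤ δ) {k j : ℕ}
    (hkj : k ≤ j) :
    1 / (poch (a + δ) k * poch b j) + 1 / (poch (a + δ) j * poch b k) ≤
      1 / (poch (b + δ) k * poch a j) + 1 / (poch (b + δ) j * poch a k) := by
  obtain ⟨d, rfl⟩ := Nat.exists_eq_add_of_le hkj
  have hsplit : ∀ p q r s : ℝ,
      1 / (p * (q * r)) + 1 / (p * s * q) = 1 / (p * q) * (1 / r + 1 / s) := by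
    intros; simp only [one_div, mul_inv]; ring
  simp only [poch_add, hsplit]
  have hbracket := one_div_poch_add_one_div_poch_le (x := a + k) (y := b + k)
    (by positivity) (by linarith) hδ d
  rw [add_right_comm a, add_right_comm b] at hbracket
  have hb : 0 < b := ha.trans_le hab
  have hA := poch_pos ha k
  have hA' := poch_pos (add_pos_of_pos_of_nonneg ha hδ) k
  have hB' := poch_pos (add_pos_of_pos_of_nonneg hb hδ) k
  have hprefix : 1 / (poch (a + δ) k * poch b k) ≤ 1 / (poch (b + δ) k * poch a k) :=
    one_div_le_one_div_of_le (by positivity) (by linarith [poch_mul_poch_add_le ha.le hab hδ k])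
  have := poch_pos (c := b + k) (by positivity) d
  have := poch_pos (c := a + δ + k) (by positivity) d
  exact mul_le_mul hprefix hbracket (by positivity) (by positivity)

lemma one_div_poch_mul_poch_pair_le (ha : 0 < a) (hab : a ≤ b) (hδ : 0 ≤ δ) (k j : ℕ) :
    1 / (poch (a + δ) k * poch b j) + 1 / (poch (a + δ) j * poch b k) ≤
      1 / (poch (b + δ) k * poch a j) + 1 / (poch (b + δ) j * poch a k) := by
  rcases le_total k j with hkj | hjk
  · exact one_div_poch_mul_poch_pair_le_of_le ha hab hδ hkj
  · linarith [one_div_poch_mul_poch_pair_le_of_le ha hab hδ hjk]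

/-- The coefficient of `x^m` in `h(a+δ,x) h(b,x) - h(b+δ,x) h(a,x)`, where
`h(c,x) = ∑ h_n x^n / (c)_n`. -/
noncomputable def crossCoeff (h : ℕ → ℝ) (a b δ : ℝ) (m : ℕ) : ℝ :=
  ∑ k ∈ range (m + 1), h k * h (m - k) *
    (1 / (poch (a + δ) k * poch b (m - k)) - 1 / (poch (b + δ) k * poch a (m - k)))

variable {h : ℕ → ℝ}

lemma crossCoeff_neg (hh : ∀ n, 0 < h n) (ha : 0 < a) (hab : a < b) (hδ : 0 < δ) {m : ℕ}
    (hm : 1 ≤ m) : crossCoeff h a b δ m < 0 := by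
  apply sum_range_neg_of_add_reflect_nonpos
  · intro k hk
    rw [Nat.sub_sub_self hk]
    have hpair := one_div_poch_mul_poch_pair_le ha hab.le hδ.le k (m - k)
    linear_combination
      mul_nonpos_of_nonneg_of_nonpos (mul_pos (hh k) (hh (m - k))).le (sub_nonpos.mpr hpair)
  · simp only [Nat.sub_zero, Nat.sub_self, poch_zero, mul_one, one_mul]
    have hlt := one_div_poch_add_one_div_poch_lt ha hab hδ hm
    linear_combination mul_neg_of_pos_of_neg (mul_pos (hh 0) (hh m)) (sub_neg.mpr hlt)

lemma crossCoeff_nonpos (hh : ∀ n, 0 < h n) (ha : 0 < a) (hab : a < b) (hδ : 0 < δ) (m : ℕ) :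
    crossCoeff h a b δ m ≤ 0 := by
  rcases m with _ | m
  · simp [crossCoeff, poch_zero]
  · exact (crossCoeff_neg hh ha hab hδ (Nat.le_add_left 1 m)).le

lemma sum_range_cauchy_sub_eq_pow_mul_crossCoeff (h : ℕ → ℝ) (a b δ x : ℝ) (n : ℕ) :
    ∑ k ∈ range (n + 1),
        h k * x ^ k / poch (a + δ) k * (h (n - k) * x ^ (n - k) / poch b (n - k)) -
      ∑ k ∈ range (n + 1),
        h k * x ^ k / poch (b + δ) k * (h (n - k) * x ^ (n - k) / poch a (n - k)) =
      x ^ n * crossCoeff h a b δ n := by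
  rw [crossCoeff, ← sum_sub_distrib, mul_sum]
  refine sum_congr rfl fun k hk => ?_
  rw [← Nat.add_sub_cancel' (Nat.lt_succ_iff.mp (mem_range.mp hk)), pow_add,
    Nat.add_sub_cancel_left]
  ring

end Coefficients

theorem stmt_16 (h : ℕ → ℝ) (hh : ∀ n, 0 < h n)
    (a b δ : ℝ) (ha : 0 < a) (hab : a < b) (hδ : 0 < δ) :
    (∀ m : ℕ, 1 ≤ m →
      (∑ k ∈ Finset.range (m + 1),
        h k * h (m - k) *
          (1 / (poch (a + δ) k * poch b (m - k)) -
            1 / (poch (b + δ) k * poch a (m - k)))) < 0) ∧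
    (∀ x : ℝ, 0 < x →
      (∀ c : ℝ, 0 < c → Summable (fun n : ℕ => h n * x ^ n / poch c n)) →
      (∑' n : ℕ, h n * x ^ n / poch (a + δ) n) * (∑' n : ℕ, h n * x ^ n / poch b n) <
        (∑' n : ℕ, h n * x ^ n / poch (b + δ) n) * (∑' n : ℕ, h n * x ^ n / poch a n)) := by
  refine ⟨fun m hm => crossCoeff_neg hh ha hab hδ hm, fun x hx hsummable => ?_⟩
  have hb : 0 < b := ha.trans hab
  refine tsum_mul_tsum_lt_of_sum_range_mul (hsummable _ (by positivity)) (hsummable _ hb)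
    (hsummable _ (by positivity)) (hsummable _ ha) (fun n => ?_) (N := 1) ?_
  · rw [← sub_nonpos, sum_range_cauchy_sub_eq_pow_mul_crossCoeff]
    exact mul_nonpos_of_nonneg_of_nonpos (by positivity) (crossCoeff_nonpos hh ha hab hδ n)
  · rw [← sub_neg, sum_range_cauchy_sub_eq_pow_mul_crossCoeff]
    exact mul_neg_of_pos_of_neg (by positivity) (crossCoeff_neg hh ha hab hδ le_rfl)
end
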